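/- Let F_A be a free group on a nonempty set A and let κ = |F_A|. Then F_A admits no maximal left invariant κ-bounded topology; that is, there is no topology τ on F_A such that (F_A, τ) is left topological, every nonempty τ-open set is left κ-large, τ has no isolated points, and every topology strictly finer than τ has an isolated point. -/

import Mathlib

/-!
If `P` and `Pᶜ` are both left `κ`-thick, neither is left `κ`-large, so `P` is not open in a
`κ`-bounded topology `τ`. Adjoining `P` to `τ` then gives a strictly finer topology; an isolated
point `x` of it has a `τ`-open neighbourhood `V` with `V ∩ P ⊆ {x}`, and `V \ {x}`, which is
still left `κ`-large because `τ` has no isolated points, lies in `Pᶜ`: a contradiction.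

In a free group such a `P` is the set of elements whose reduced word ends in a positive letter
(with `Pᶜ` containing those ending in a negative one): right multiplication of fewer than `κ`
elements by a long power of a letter, or by a letter none of them ends in the inverse of,
makes all of them end in that letter.
-/

open scoped Pointwise
open Cardinal

universe u

variable {G : Type u}

/-- `A` is left `κ`-large: `G = F * A` for some `F` with `|F| < κ`. -/
def LeftLarge [Group G] (κ : Cardinal.{u}) (A : Set G) : Prop :=
  ∃ F : Set G, #F < κ ∧ F * A = Set.univ

/-- `A` is right `κ`-large: `G = A * F` for some `F` with `|F| < κ`. -/
def RightLarge [Group G] (κ : Cardinal.{u}) (A : Set G) : Prop :=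
  ∃ F : Set G, #F < κ ∧ A * F = Set.univ

/-- `A` is `κ`-large: `G = F * A * F` for some `F` with `|F| < κ`. -/
def KLarge [Group G] (κ : Cardinal.{u}) (A : Set G) : Prop :=
  ∃ F : Set G, #F < κ ∧ F * A * F = Set.univ

/-- `A` is left `κ`-thick: for every `F` with `|F| < κ` there is `a ∈ A` with `F * a ⊆ A`. -/
def LeftThick [Group G] (κ : Cardinal.{u}) (A : Set G) : Prop :=
  ∀ F : Set G, #F < κ → ∃ a ∈ A, F * {a} ⊆ A

/-- `A` is right `κ`-thick: for every `F` with `|F| < κ` there is `a ∈ A` with `a * F ⊆ A`. -/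
def RightThick [Group G] (κ : Cardinal.{u}) (A : Set G) : Prop :=
  ∀ F : Set G, #F < κ → ∃ a ∈ A, {a} * F ⊆ A

/-- `A` is `κ`-thick: for every `F` with `|F| < κ` there is `a ∈ A` with `F * a * F ⊆ A`. -/
def KThick [Group G] (κ : Cardinal.{u}) (A : Set G) : Prop :=
  ∀ F : Set G, #F < κ → ∃ a ∈ A, F * {a} * F ⊆ A

/-- `G` is `κ`-normal: every subset of size `< κ` lies in a normal subgroup of size `< κ`. -/
def KNormal (G : Type u) [Group G] (κ : Cardinal.{u}) : Prop :=
  ∀ F : Set G, #F < κ → ∃ H : Subgroup G, H.Normal ∧ #(H : Set G) < κ ∧ F ⊆ (H : Set G)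

/-- `κ` is a singular cardinal: infinite, with cofinality strictly less than `κ`. -/
def Singular (κ : Cardinal.{u}) : Prop := ℵ₀ ≤ κ ∧ κ.ord.cof < κ

/-- A topology on a group is left invariant if all left shifts are continuous. -/
def LeftInvariant [Group G] (τ : TopologicalSpace G) : Prop :=
  ∀ g : G, @Continuous G G τ τ fun x => g * x

/-- A topology on a group of cardinality `κ` is `κ`-bounded if every nonempty open
set is left `κ`-large. -/
def KBounded [Group G] (κ : Cardinal.{u}) (τ : TopologicalSpace G) : Prop :=
  ∀ U : Set G, τ.IsOpen U → U.Nonempty → LeftLarge κ U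

/-- A topology has no isolated points if no singleton is open. -/
def NoIsolatedPoints (τ : TopologicalSpace G) : Prop :=
  ∀ x : G, ¬ τ.IsOpen {x}

/-- A topology (with no isolated points) is maximal if every strictly finer topology
has an isolated point (an open singleton). -/
def MaximalTopology (τ : TopologicalSpace G) : Prop :=
  ∀ τ' : TopologicalSpace G,
    (∀ U : Set G, τ.IsOpen U → τ'.IsOpen U) →
    (∃ V : Set G, τ'.IsOpen V ∧ ¬ τ.IsOpen V) →
    ∃ x : G, τ'.IsOpen {x}

open Filter Topology

section LeftLargeThick

variable [Group G] {κ : Cardinal.{u}} {S T P : Set G}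

lemma LeftLarge.mono (hS : LeftLarge κ S) (hST : S ⊆ T) : LeftLarge κ T := by
  obtain ⟨F, hF, hFS⟩ := hS
  exact ⟨F, hF, Set.eq_univ_of_univ_subset (hFS ▸ Set.mul_subset_mul_left hST)⟩

lemma LeftLarge.diff_singleton (hκ : ℵ₀ ≤ κ) (hS : LeftLarge κ S) {x : G}
    (hne : (S \ {x}).Nonempty) : LeftLarge κ (S \ {x}) := by
  obtain ⟨F, hF, hFS⟩ := hS
  obtain ⟨q, hq⟩ := hne
  -- the points `f * x` lost by removing `x` are recovered as `(f * x * q⁻¹) * q`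
  refine ⟨F ∪ (fun f ↦ f * x * q⁻¹) '' F, ?_, Set.eq_univ_of_forall fun g ↦ ?_⟩
  · exact (mk_union_le _ _).trans_lt (add_lt_of_lt hκ hF (mk_image_le.trans_lt hF))
  · obtain ⟨f, hf, s, hs, rfl⟩ := Set.mem_mul.1 (hFS ▸ Set.mem_univ g)
    by_cases hsx : s = x
    · exact Set.mem_mul.2 ⟨f * x * q⁻¹, Or.inr ⟨f, hf, rfl⟩, q, hq, by simp [hsx]⟩
    · exact Set.mul_mem_mul (Or.inl hf) ⟨hs, hsx⟩

lemma LeftThick.nonempty (hκ : κ ≠ 0) (hT : LeftThick κ T) : T.Nonempty := by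
  obtain ⟨a, ha, -⟩ := hT ∅ (by simpa [pos_iff_ne_zero] using hκ)
  exact ⟨a, ha⟩

lemma LeftThick.mono (hS : LeftThick κ S) (hST : S ⊆ T) : LeftThick κ T := fun F hF ↦
  let ⟨a, ha, hFa⟩ := hS F hF
  ⟨a, hST ha, hFa.trans hST⟩

lemma LeftThick.of_forall_exists_mul_subset (hκ : ℵ₀ ≤ κ)
    (h : ∀ F : Set G, #F < κ → ∃ a, F * {a} ⊆ T) : LeftThick κ T := by
  intro F hF
  obtain ⟨a, ha⟩ := h (insert 1 F) <|
    mk_insert_le.trans_lt (add_lt_of_lt hκ hF (one_lt_aleph0.trans_le hκ))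
  refine ⟨a, ha ⟨1, Set.mem_insert _ _, a, rfl, one_mul a⟩, ?_⟩
  exact (Set.mul_subset_mul_right (Set.subset_insert _ _)).trans ha

lemma LeftLarge.inter_nonempty (hS : LeftLarge κ S) (hT : LeftThick κ T) :
    (S ∩ T).Nonempty := by
  obtain ⟨F, hF, hFS⟩ := hS
  obtain ⟨a, -, haT⟩ := hT F⁻¹ (by rwa [mk_inv])
  obtain ⟨f, hf, s, hs, rfl⟩ := Set.mem_mul.1 (hFS ▸ Set.mem_univ a)
  exact ⟨s, hs, by simpa using haT (Set.mul_mem_mul (Set.inv_mem_inv.2 hf) rfl)⟩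

lemma LeftLarge.not_leftThick_compl (hS : LeftLarge κ S) : ¬ LeftThick κ Sᶜ := fun hT ↦
  let ⟨_, hs, hs'⟩ := hS.inter_nonempty hT
  hs' hs

end LeftLargeThick

lemma exists_isOpen_inter_subset_of_isOpen_inf_generateFrom {τ : TopologicalSpace G}
    {P W : Set G} (hW : IsOpen[τ ⊓ TopologicalSpace.generateFrom {P}] W) {x : G} (hx : x ∈ W) :
    ∃ V, IsOpen[τ] V ∧ x ∈ V ∧ V ∩ P ⊆ W := by
  have hP : 𝓟 P ≤ @nhds G (TopologicalSpace.generateFrom {P}) x := by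
    rw [TopologicalSpace.nhds_generateFrom]
    exact le_iInf₂ fun s ⟨_, hs⟩ ↦ by rw [Set.mem_singleton_iff.1 hs]
  have hWx : W ∈ @nhds G τ x ⊓ 𝓟 P := by
    refine inf_le_inf_left _ hP ?_
    rw [← nhds_inf]
    exact @IsOpen.mem_nhds G (τ ⊓ TopologicalSpace.generateFrom {P}) _ _ hW hx
  obtain ⟨V, hVW, hV, hxV⟩ := (@_root_.mem_nhds_iff G τ _ _).1 (mem_inf_principal.1 hWx)
  exact ⟨V, hV, hxV, fun y ⟨hyV, hyP⟩ ↦ hVW hyV hyP⟩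

theorem not_maximalTopology_of_leftThick_of_leftThick_compl [Group G] {κ : Cardinal.{u}}
    (hκ : ℵ₀ ≤ κ) {P : Set G} (hP : LeftThick κ P) (hPc : LeftThick κ Pᶜ)
    {τ : TopologicalSpace G} (hbnd : KBounded κ τ) (hni : NoIsolatedPoints τ) :
    ¬ MaximalTopology τ := by
  intro hmax
  have hPτ : ¬ IsOpen[τ] P := fun h ↦
    (hbnd P h (hP.nonempty (aleph0_pos.trans_le hκ).ne')).not_leftThick_compl hPc
  obtain ⟨x, hx⟩ := hmax (τ ⊓ TopologicalSpace.generateFrom {P})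
    (TopologicalSpace.le_def.1 inf_le_left)
    ⟨P, TopologicalSpace.le_def.1 inf_le_right P
      (TopologicalSpace.isOpen_generateFrom_of_mem rfl), hPτ⟩
  obtain ⟨V, hV, hxV, hVP⟩ := exists_isOpen_inter_subset_of_isOpen_inf_generateFrom hx rfl
  have hne : (V \ {x}).Nonempty := by
    refine Set.nonempty_iff_ne_empty.2 fun h ↦ hni x ?_
    rwa [Set.Subset.antisymm (Set.sdiff_eq_empty.1 h) (Set.singleton_subset_iff.2 hxV)] at hV
  have hVPc : V \ {x} ⊆ Pᶜ := fun y ⟨hyV, hyx⟩ hyP ↦ hyx (hVP ⟨hyV, hyP⟩)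
  exact (((hbnd V hV ⟨x, hxV⟩).diff_singleton hκ hne).mono hVPc).not_leftThick_compl
    (by rwa [compl_compl])

namespace FreeGroup

variable {α : Type u} [DecidableEq α]

def endsWithSign (b : Bool) : Set (FreeGroup α) :=
  {w | ∃ x, w.toWord.getLast? = some (x, b)}

lemma endsWithSign_false_subset_compl_true :
    endsWithSign (α := α) false ⊆ (endsWithSign true)ᶜ := by
  rintro w ⟨x, hx⟩ ⟨y, hy⟩
  simp [hx] at hy

lemma toWord_mul_mk_singleton {g : FreeGroup α} {x : α} {b : Bool}
    (h : g.toWord.getLast? ≠ some (x, !b)) :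
    (g * mk [(x, b)]).toWord = g.toWord ++ [(x, b)] := by
  rw [toWord_mul, toWord_mk, reduce_singleton]
  refine IsReduced.reduce_eq (List.isChain_append.2 ⟨isReduced_toWord, .singleton _, ?_⟩)
  rintro ⟨y, c⟩ hy _ hz rfl
  simp only [List.head?_cons, Option.mem_def, Option.some.injEq] at hz hy
  subst hz
  cases b <;> cases c <;> simp_all

lemma norm_mul_mk_singleton_add_one {g : FreeGroup α} {x : α} {b : Bool}
    (h : g.toWord.getLast? = some (x, !b)) : (g * mk [(x, b)]).norm + 1 = g.norm := by
  obtain ⟨L, hL⟩ := List.getLast?_eq_some_iff.1 h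
  have hLred : IsReduced L := isReduced_toWord.infix (hL ▸ List.prefix_append L _).isInfix
  have hinv : mk [(x, !b)] = (mk [(x, b)])⁻¹ := by simp [inv_mk, invRev]
  have hmul : g * mk [(x, b)] = mk L := by
    rw [← mk_toWord (x := g), hL, ← mul_mk, hinv, inv_mul_cancel_right]
  rw [norm, norm, hmul, toWord_mk, hLred.reduce_eq, hL, List.length_append, List.length_singleton]

lemma getLast?_toWord_mul_pow_or (f : FreeGroup α) (x : α) (b : Bool) (n : ℕ) :
    (f * mk [(x, b)] ^ n).toWord.getLast? = some (x, b) ∨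
      (f * mk [(x, b)] ^ n).norm + n = f.norm := by
  induction n with
  | zero => simp
  | succ n ih =>
    rw [pow_succ, ← mul_assoc]
    by_cases hg : (f * mk [(x, b)] ^ n).toWord.getLast? = some (x, !b)
    · have hcancel := norm_mul_mk_singleton_add_one hg
      rcases ih with h | h
      · exact absurd (hg.symm.trans h) (by simp)
      · right; omega
    · left
      rw [toWord_mul_mk_singleton hg, List.getLast?_concat]

lemma getLast?_toWord_mul_pow_of_norm_lt {f : FreeGroup α} {n : ℕ} (hn : f.norm < n)
    (x : α) (b : Bool) : (f * mk [(x, b)] ^ n).toWord.getLast? = some (x, b) :=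
  (getLast?_toWord_mul_pow_or f x b n).resolve_right (by omega)

lemma exists_mul_subset_endsWithSign [Nonempty α] (b : Bool) {F : Set (FreeGroup α)}
    (hF : #F < #(FreeGroup α)) : ∃ a, F * {a} ⊆ endsWithSign b := by
  rcases lt_max_iff.1 (mk_freeGroup α ▸ hF) with hF | hF
  · -- append a letter `x` such that no `f ∈ F` ends with `x⁻¹`
    have hS : #((fun x ↦ some (x, !b)) ⁻¹' ((fun f : FreeGroup α ↦ f.toWord.getLast?) '' F))
        < #α :=
      (mk_preimage_of_injective _ _ fun x y h ↦ by simpa using h).trans_lt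
        (mk_image_le.trans_lt hF)
    obtain ⟨x, hx⟩ := compl_nonempty_of_mk_lt_mk hS
    refine ⟨mk [(x, b)], ?_⟩
    rintro _ ⟨f, hf, _, rfl, rfl⟩
    exact ⟨x, by simp [toWord_mul_mk_singleton fun h ↦ hx ⟨f, hf, h⟩]⟩
  · -- `F` is finite: cancellation cannot consume a power of a letter longer than every `f ∈ F`
    obtain ⟨m, hm⟩ := ((lt_aleph0_iff_set_finite.1 hF).image norm).bddAbove
    refine ⟨mk [(Classical.arbitrary α, b)] ^ (m + 1), ?_⟩
    rintro _ ⟨f, hf, _, rfl, rfl⟩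
    exact ⟨_, getLast?_toWord_mul_pow_of_norm_lt (Nat.lt_succ_of_le (hm ⟨f, hf, rfl⟩)) _ _⟩

lemma leftThick_endsWithSign [Nonempty α] (b : Bool) :
    LeftThick #(FreeGroup α) (endsWithSign (α := α) b) :=
  .of_forall_exists_mul_subset (aleph0_le_mk _) fun _ ↦ exists_mul_subset_endsWithSign b

end FreeGroup

/-- A free group `F_A` on a nonempty set `A` admits no maximal
left invariant `κ`-bounded topology, where `κ = |F_A|`. -/
theorem freeGroup_no_maximal_kBounded_topology (A : Type u) [Nonempty A] :
    ¬ ∃ τ : TopologicalSpace (FreeGroup A),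
        LeftInvariant τ ∧ KBounded (#(FreeGroup A)) τ ∧
        NoIsolatedPoints τ ∧ MaximalTopology τ := by
  classical
  rintro ⟨τ, -, hbnd, hni, hmax⟩
  exact not_maximalTopology_of_leftThick_of_leftThick_compl (aleph0_le_mk _)
    (FreeGroup.leftThick_endsWithSign true)
    ((FreeGroup.leftThick_endsWithSign false).mono FreeGroup.endsWithSign_false_subset_compl_true)
    hbnd hni hmax
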